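/- arXiv:2404.16378 — 3 statements merged into one kernel-verified Lean document; each statement's English description precedes it below -/
import Mathlib

section
/- Let R be a commutative ring equipped with a power structure (a_n)_{n≥0}, and let u ∈ R be an element satisfying a_n(u) = u^n for all n ≥ 0. Then for all natural numbers l ≥ 1 and n ≥ 0, one has a_n(-(l·u)) = (-1)^n · binomial(l, n) · u^n in R. -/
/-- Let `R` be a commutative ring equipped with a power structure
`(a n)_{n ≥ 0}`, and let `u ∈ R` satisfy `a n u = u ^ n` for all `n ≥ 0`.  Then for all
natural numbers `l ≥ 1` and `n ≥ 0`, one has `a n (-(l • u)) = (-1)^n * C(l, n) * u^n`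
in `R`. -/
theorem power_structure_neg_multiple {R : Type*} [CommRing R]
    (a : ℕ → R → R)
    (h0 : ∀ r : R, a 0 r = 1)
    (h1 : ∀ r : R, a 1 r = r)
    (hzero : ∀ n : ℕ, 1 ≤ n → a n 0 = 0)
    (hone : ∀ n : ℕ, 1 ≤ n → a n 1 = 1)
    (hadd : ∀ (r s : R) (n : ℕ),
      a n (r + s) = ∑ i ∈ Finset.range (n + 1), a i r * a (n - i) s)
    (u : R) (hu : ∀ n : ℕ, a n u = u ^ n)
    (l : ℕ) (hl : 1 ≤ l) (n : ℕ) :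
    a n (-(l • u)) = (-1 : R) ^ n * (l.choose n : R) * u ^ n := by
  -- Step 1: `a n (-u) = (-1)^n * C(1,n) * u^n`
  have hnegu : ∀ n : ℕ, a n (-u) = (-1 : R) ^ n * ((Nat.choose 1 n : ℕ) : R) * u ^ n := by
    intro n
    induction n using Nat.strong_induction_on with
    | _ n ih =>
      match n with
      | 0 => simp [h0]
      | 1 => simp [h1]
      | (m + 2) =>
        have h := hadd u (-u) (m + 2)
        rw [add_neg_cancel, hzero _ (by omega), Finset.sum_range_succ'] at h
        have hsum : ∑ i ∈ Finset.range (m + 2), a (i + 1) u * a (m + 2 - (i + 1)) (-u) = 0 := by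
          rw [Finset.sum_range_succ, Finset.sum_range_succ]
          have e0 : ∑ i ∈ Finset.range m, a (i + 1) u * a (m + 2 - (i + 1)) (-u) = 0 := by
            apply Finset.sum_eq_zero
            intro i hi
            simp only [Finset.mem_range] at hi
            rw [ih (m + 2 - (i + 1)) (by omega)]
            have : Nat.choose 1 (m + 1 - i) = 0 :=
              Nat.choose_eq_zero_of_lt (by omega)
            simp [this]
          rw [e0, zero_add]
          have e1 : m + 2 - (m + 1 + 1) = 0 := by omega
          have e2 : m + 2 - (m + 1) = 1 := by omega
          rw [e1, e2, ih 0 (by omega), ih 1 (by omega), hu, hu]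
          simp
          ring
        rw [hsum, zero_add, h0, one_mul] at h
        have hc : Nat.choose 1 (m + 2) = 0 := Nat.choose_eq_zero_of_lt (by omega)
        rw [hc]
        simp only [Nat.cast_zero, mul_zero, zero_mul]
        exact h.symm
  -- Step 2: induction on l
  have key : ∀ l : ℕ, 1 ≤ l → ∀ n : ℕ,
      a n (-(l • u)) = (-1 : R) ^ n * (l.choose n : R) * u ^ n := by
    intro l hl
    induction l, hl using Nat.le_induction with
    | base =>
      intro n
      simpa using hnegu n
    | succ l hl ih =>
      intro n
      have hsplit : -((l + 1) • u) = -(l • u) + -u := by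
        rw [succ_nsmul]; ring
      rw [hsplit, hadd]
      cases n with
      | zero => simp [h0]
      | succ m =>
        rw [Finset.sum_range_succ, Finset.sum_range_succ]
        have hz : ∑ i ∈ Finset.range m, a i (-(l • u)) * a (m + 1 - i) (-u) = 0 := by
          apply Finset.sum_eq_zero
          intro i hi
          simp only [Finset.mem_range] at hi
          rw [hnegu]
          have : Nat.choose 1 (m + 1 - i) = 0 := Nat.choose_eq_zero_of_lt (by omega)
          simp [this]
        have e1 : m + 1 - m = 1 := by omega
        have e2 : m + 1 - (m + 1) = 0 := by omega
        rw [hz, zero_add, e1, e2, ih m, ih (m + 1), hnegu 1, hnegu 0]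
        have hp : (l + 1).choose (m + 1) = l.choose m + l.choose (m + 1) :=
          Nat.choose_succ_succ l m
        rw [hp, show Nat.choose 1 1 = 1 from rfl, show Nat.choose 1 0 = 1 from rfl]
        push_cast
        ring
  exact key l hl n
end

section
/- Let R be a commutative ring equipped with a power structure (a_n)_{n≥0}, let u ∈ R satisfy a_n(u) = u^n for all n ≥ 0, and set H := 1 + u ∈ R. Then for all natural numbers l ≥ 1 and n ≥ 0, one has a_n(-(l·H)) = (-1)^n · Σ_{i=0}^{n} binomial(l, i)·binomial(l, n-i)·u^{n-i} in R. -/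
/-!
The generating series `A_r(t) = ∑ aₙ(r) tⁿ` turns the power structure into a homomorphism from
`(R, +)` to the multiplicative monoid of `R⟦t⟧`. The hypothesis on `u` (and the axiom `aₙ(1) = 1`)
says `A_u = 1 / (1 - u t)` and `A_1 = 1 / (1 - t)`, so `A_{-lH} = ((1 - t)(1 - u t))ˡ`, whose
coefficients are read off from the binomial theorem.
-/

open PowerSeries Finset

namespace PowerSeries

variable {R : Type*} [CommRing R]

theorem coeff_one_add_X_pow (l n : ℕ) : coeff n ((1 + X : R⟦X⟧) ^ l) = l.choose n := by
  have hcoe : (1 + X : R⟦X⟧) ^ l = ((1 + Polynomial.X : Polynomial R) ^ l : Polynomial R) := by simp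
  rw [hcoe, Polynomial.coeff_coe, Polynomial.coeff_one_add_X_pow]

theorem coeff_one_sub_C_mul_X_pow (c : R) (l n : ℕ) :
    coeff n ((1 - C c * X) ^ l) = (-c) ^ n * l.choose n := by
  have hrescale : (1 - C c * X) ^ l = rescale (-c) ((1 + X) ^ l) := by
    rw [map_pow, map_add, map_one, rescale_X, map_neg, neg_mul, ← sub_eq_add_neg]
  rw [hrescale, coeff_rescale, coeff_one_add_X_pow]

theorem coeff_one_sub_X_pow (l n : ℕ) : coeff n ((1 - X : R⟦X⟧) ^ l) = (-1) ^ n * l.choose n := by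
  simpa using coeff_one_sub_C_mul_X_pow (1 : R) l n

theorem coeff_one_sub_X_mul_one_sub_C_mul_X_pow (u : R) (l n : ℕ) :
    coeff n (((1 - X) * (1 - C u * X)) ^ l) =
      (-1) ^ n * ∑ i ∈ range (n + 1), (l.choose i : R) * l.choose (n - i) * u ^ (n - i) := by
  rw [mul_pow, coeff_mul, Nat.sum_antidiagonal_eq_sum_range_succ
    (fun i j => coeff i ((1 - X : R⟦X⟧) ^ l) * coeff j ((1 - C u * X) ^ l)), mul_sum]
  refine sum_congr rfl fun i hi => ?_
  have hsign : (-1 : R) ^ n = (-1) ^ i * (-1) ^ (n - i) := by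
    rw [← pow_add, Nat.add_sub_cancel' (Nat.lt_succ_iff.mp (mem_range.mp hi))]
  rw [coeff_one_sub_X_pow, coeff_one_sub_C_mul_X_pow, hsign, neg_pow u]
  ring

theorem mk_pow_mul_one_sub_C_mul_X (c : R) : mk (c ^ ·) * (1 - C c * X) = 1 := by
  simpa [rescale_mk, rescale_X] using congrArg (rescale c) (mk_one_mul_one_sub_eq_one R)

end PowerSeries

section PowerStructure

variable {R : Type*} [CommRing R] (a : ℕ → R → R)

def powerSeriesOf (r : R) : R⟦X⟧ := mk fun n => a n r

variable {a}

theorem coeff_powerSeriesOf (r : R) (n : ℕ) : coeff n (powerSeriesOf a r) = a n r :=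
  coeff_mk n _

theorem powerSeriesOf_add
    (hadd : ∀ (r s : R) (n : ℕ), a n (r + s) = ∑ i ∈ range (n + 1), a i r * a (n - i) s)
    (r s : R) : powerSeriesOf a (r + s) = powerSeriesOf a r * powerSeriesOf a s := by
  ext n
  rw [coeff_mul, Nat.sum_antidiagonal_eq_sum_range_succ
    (fun i j => coeff i (powerSeriesOf a r) * coeff j (powerSeriesOf a s))]
  simp only [coeff_powerSeriesOf, hadd]

theorem powerSeriesOf_zero (h0 : ∀ r : R, a 0 r = 1) (hzero : ∀ n : ℕ, 1 ≤ n → a n 0 = 0) :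
    powerSeriesOf a 0 = 1 := by
  ext (_ | n)
  · simp [coeff_powerSeriesOf, h0]
  · simp [coeff_powerSeriesOf, hzero, coeff_one]

theorem powerSeriesOf_mul_one_sub_C_mul_X {u : R} (hu : ∀ n : ℕ, a n u = u ^ n) :
    powerSeriesOf a u * (1 - C u * X) = 1 := by
  simpa only [powerSeriesOf, hu] using mk_pow_mul_one_sub_C_mul_X u

theorem powerSeriesOf_neg_nsmul (h0 : ∀ r : R, a 0 r = 1)
    (hzero : ∀ n : ℕ, 1 ≤ n → a n 0 = 0)
    (hadd : ∀ (r s : R) (n : ℕ), a n (r + s) = ∑ i ∈ range (n + 1), a i r * a (n - i) s)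
    {x : R} {Q : R⟦X⟧} (hx : powerSeriesOf a x * Q = 1) (l : ℕ) :
    powerSeriesOf a (-(l • x)) = Q ^ l := by
  have hnsmul : powerSeriesOf a (l • x) * Q ^ l = 1 := by
    induction l with
    | zero => simp [powerSeriesOf_zero h0 hzero]
    | succ k ih =>
      rw [succ_nsmul, powerSeriesOf_add hadd, pow_succ, mul_mul_mul_comm, ih, hx, one_mul]
  have hneg : powerSeriesOf a (-(l • x)) * powerSeriesOf a (l • x) = 1 := by
    rw [← powerSeriesOf_add hadd, neg_add_cancel, powerSeriesOf_zero h0 hzero]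
  calc powerSeriesOf a (-(l • x))
      = powerSeriesOf a (-(l • x)) * (powerSeriesOf a (l • x) * Q ^ l) := by rw [hnsmul, mul_one]
    _ = Q ^ l := by rw [← mul_assoc, hneg, one_mul]

end PowerStructure

theorem power_structure_neg_hyperbolic_general {R : Type*} [CommRing R]
    (a : ℕ → R → R)
    (h0 : ∀ r : R, a 0 r = 1)
    (hzero : ∀ n : ℕ, 1 ≤ n → a n 0 = 0)
    (hone : ∀ n : ℕ, 1 ≤ n → a n 1 = 1)
    (hadd : ∀ (r s : R) (n : ℕ),
      a n (r + s) = ∑ i ∈ Finset.range (n + 1), a i r * a (n - i) s)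
    (u : R) (hu : ∀ n : ℕ, a n u = u ^ n)
    (H : R) (hH : H = 1 + u)
    (l : ℕ) (n : ℕ) :
    a n (-(l • H)) =
      (-1 : R) ^ n *
        ∑ i ∈ Finset.range (n + 1),
          (l.choose i : R) * (l.choose (n - i) : R) * u ^ (n - i) := by
  have hone_pow : ∀ n : ℕ, a n 1 = 1 ^ n := fun
    | 0 => (h0 1).trans (pow_zero 1).symm
    | n + 1 => (hone (n + 1) n.succ_pos).trans (one_pow _).symm
  have hH_inv : powerSeriesOf a H * ((1 - X) * (1 - C u * X)) = 1 := by
    have hA_one := powerSeriesOf_mul_one_sub_C_mul_X hone_pow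
    rw [map_one, one_mul] at hA_one
    rw [hH, powerSeriesOf_add hadd, mul_mul_mul_comm, hA_one,
      powerSeriesOf_mul_one_sub_C_mul_X hu, one_mul]
  rw [← coeff_powerSeriesOf (a := a), powerSeriesOf_neg_nsmul h0 hzero hadd hH_inv,
    coeff_one_sub_X_mul_one_sub_C_mul_X_pow]

/-- Let `R` be a commutative ring equipped with a power structure
`(a n)_{n ≥ 0}`, let `u ∈ R` satisfy `a n u = u ^ n` for all `n ≥ 0`, and set
`H := 1 + u`.  Then for all natural numbers `l ≥ 1` and `n ≥ 0`, one has
`a n (-(l • H)) = (-1)^n * ∑_{i=0}^{n} C(l, i) * C(l, n - i) * u^(n - i)` in `R`. -/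
theorem power_structure_neg_hyperbolic {R : Type*} [CommRing R]
    (a : ℕ → R → R)
    (h0 : ∀ r : R, a 0 r = 1)
    (h1 : ∀ r : R, a 1 r = r)
    (hzero : ∀ n : ℕ, 1 ≤ n → a n 0 = 0)
    (hone : ∀ n : ℕ, 1 ≤ n → a n 1 = 1)
    (hadd : ∀ (r s : R) (n : ℕ),
      a n (r + s) = ∑ i ∈ Finset.range (n + 1), a i r * a (n - i) s)
    (u : R) (hu : ∀ n : ℕ, a n u = u ^ n)
    (H : R) (hH : H = 1 + u)
    (l : ℕ) (hl : 1 ≤ l) (n : ℕ) :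
    a n (-(l • H)) =
      (-1 : R) ^ n *
        ∑ i ∈ Finset.range (n + 1),
          (l.choose i : R) * (l.choose (n - i) : R) * u ^ (n - i) :=
  power_structure_neg_hyperbolic_general a h0 hzero hone hadd u hu H hH l n
end

section
/- Let R be a commutative ring equipped with a power structure (a_n)_{n≥0}, let u ∈ R satisfy a_n(u) = u^n for all n ≥ 0, and set H := 1 + u ∈ R. Then for every natural number l ≥ 1, the generating power series of (a_n(-(l·H)))_{n≥0} satisfies Σ_{n≥0} a_n(-(l·H)) t^n = ((1 - t)(1 - u·t))^l = (1 - H·t + u·t^2)^l in the power series ring R[[t]]. In particular, a_n(-(l·H)) is the coefficient of t^n in the polynomial (1 - H·t + u·t^2)^l. -/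
/-!
The generating series `r ↦ ∑ aₙ(r) tⁿ` of a power structure turns sums into products of power
series and sends `0` to `1`; hence `-(l • r)` goes to the `l`-th power of any inverse of the
series of `r`. Since `aₙ(1) = 1` and `aₙ(u) = uⁿ`, the series of `H = 1 + u` is the product of
the geometric series `1 / (1 - t)` and `1 / (1 - u t)`, whose inverse is `(1 - t)(1 - u t)`.
-/

open PowerSeries

theorem PowerSeries.rescale_mk_one_mul_one_sub_C_mul_X {R : Type*} [CommRing R] (c : R) :
    rescale c (mk 1) * (1 - C c * X) = (1 : R⟦X⟧) := by
  simpa [rescale_X] using congrArg (rescale c) (mk_one_mul_one_sub_eq_one R)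

namespace PowerStructure

variable {R : Type*} [CommRing R] (a : ℕ → R → R)

def series (r : R) : R⟦X⟧ :=
  mk fun n => a n r

variable {a}

theorem series_add
    (hadd : ∀ (r s : R) (n : ℕ), a n (r + s) = ∑ i ∈ Finset.range (n + 1), a i r * a (n - i) s)
    (r s : R) : series a (r + s) = series a r * series a s := by
  ext n
  rw [coeff_mul, Finset.Nat.sum_antidiagonal_eq_sum_range_succ
    (fun i j => coeff i (series a r) * coeff j (series a s))]
  simp only [series, coeff_mk, hadd]

theorem series_eq_rescale_mk_one (h0 : ∀ r : R, a 0 r = 1) {r c : R}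
    (hpos : ∀ n, 1 ≤ n → a n r = c ^ n) : series a r = rescale c (mk 1) := by
  ext (_ | n)
  · simp [series, h0]
  · simp [series, hpos (n + 1) n.succ_pos]

theorem series_zero (h0 : ∀ r : R, a 0 r = 1) (hzero : ∀ n : ℕ, 1 ≤ n → a n 0 = 0) :
    series a 0 = 1 := by
  ext (_ | n)
  · simp [series, h0]
  · simp [series, hzero (n + 1) n.succ_pos]

theorem series_nsmul
    (hadd : ∀ (r s : R) (n : ℕ), a n (r + s) = ∑ i ∈ Finset.range (n + 1), a i r * a (n - i) s)
    (h0 : ∀ r : R, a 0 r = 1) (hzero : ∀ n : ℕ, 1 ≤ n → a n 0 = 0) (r : R) (l : ℕ) :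
    series a (l • r) = series a r ^ l := by
  induction l with
  | zero => rw [zero_nsmul, pow_zero, series_zero h0 hzero]
  | succ l ih => rw [succ_nsmul, series_add hadd, ih, pow_succ]

theorem series_neg_nsmul_of_mul_eq_one
    (hadd : ∀ (r s : R) (n : ℕ), a n (r + s) = ∑ i ∈ Finset.range (n + 1), a i r * a (n - i) s)
    (h0 : ∀ r : R, a 0 r = 1) (hzero : ∀ n : ℕ, 1 ≤ n → a n 0 = 0) {r : R} {p : R⟦X⟧}
    (hp : series a r * p = 1) (l : ℕ) : series a (-(l • r)) = p ^ l :=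
  calc series a (-(l • r)) = series a (-(l • r)) * (series a r * p) ^ l := by
        rw [hp, one_pow, mul_one]
    _ = series a (-(l • r) + l • r) * p ^ l := by
        rw [mul_pow, ← series_nsmul hadd h0 hzero, series_add hadd, mul_assoc]
    _ = p ^ l := by rw [neg_add_cancel, series_zero h0 hzero, one_mul]

theorem series_add_mul_eq_one
    (hadd : ∀ (r s : R) (n : ℕ), a n (r + s) = ∑ i ∈ Finset.range (n + 1), a i r * a (n - i) s)
    (h0 : ∀ r : R, a 0 r = 1) {r s c d : R} (hr : ∀ n, 1 ≤ n → a n r = c ^ n)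
    (hs : ∀ n, 1 ≤ n → a n s = d ^ n) :
    series a (r + s) * ((1 - C c * X) * (1 - C d * X)) = 1 := by
  rw [series_add hadd, series_eq_rescale_mk_one h0 hr, series_eq_rescale_mk_one h0 hs,
    mul_mul_mul_comm, rescale_mk_one_mul_one_sub_C_mul_X, rescale_mk_one_mul_one_sub_C_mul_X,
    one_mul]

end PowerStructure

open PowerStructure

open PowerSeries in
theorem power_structure_neg_hyperbolic_series_general {R : Type*} [CommRing R]
    (a : ℕ → R → R)
    (h0 : ∀ r : R, a 0 r = 1)
    (hzero : ∀ n : ℕ, 1 ≤ n → a n 0 = 0)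
    (hone : ∀ n : ℕ, 1 ≤ n → a n 1 = 1)
    (hadd : ∀ (r s : R) (n : ℕ),
      a n (r + s) = ∑ i ∈ Finset.range (n + 1), a i r * a (n - i) s)
    (u : R) (hu : ∀ n : ℕ, a n u = u ^ n)
    (H : R) (hH : H = 1 + u)
    (l : ℕ) :
    PowerSeries.mk (fun n => a n (-(l • H))) =
        ((1 - PowerSeries.X) * (1 - PowerSeries.C u * PowerSeries.X)) ^ l ∧
    ((1 - PowerSeries.X) * (1 - PowerSeries.C u * PowerSeries.X)) ^ l =
        (1 - PowerSeries.C H * PowerSeries.X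
          + PowerSeries.C u * PowerSeries.X ^ 2) ^ l ∧
    (∀ n : ℕ, a n (-(l • H)) =
      Polynomial.coeff
        ((1 - Polynomial.C H * Polynomial.X + Polynomial.C u * Polynomial.X ^ 2) ^ l)
        n) := by
  have hinv : series a H * ((1 - X) * (1 - C u * X)) = 1 := by
    simpa [hH] using series_add_mul_eq_one hadd h0 (c := 1)
      (fun n hn => by rw [hone n hn, one_pow]) fun n _ => hu n
  have hseries : series a (-(l • H)) = ((1 - X) * (1 - C u * X)) ^ l :=
    series_neg_nsmul_of_mul_eq_one hadd h0 hzero hinv l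
  have hquad : (1 - X) * (1 - C u * X) = (1 - C H * X + C u * X ^ 2 : R⟦X⟧) := by
    rw [hH, map_add, map_one]
    ring
  refine ⟨hseries, by rw [hquad], fun n => ?_⟩
  rw [← Polynomial.coeff_coe]
  push_cast
  rw [← hquad, ← hseries, series, coeff_mk]

open PowerSeries in
/-- Let `R` be a commutative ring equipped with a power structure
`(a n)_{n ≥ 0}`, let `u ∈ R` satisfy `a n u = u ^ n` for all `n ≥ 0`, and set
`H := 1 + u`.  Then for every natural number `l ≥ 1`, the generating power series of
`(a n (-(l • H)))_{n ≥ 0}` satisfies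
`∑_{n ≥ 0} a n (-(l • H)) tⁿ = ((1 - t)(1 - u t))^l = (1 - H t + u t²)^l`
in `R[[t]]`.  In particular, `a n (-(l • H))` is the coefficient of `tⁿ` in the
polynomial `(1 - H t + u t²)^l`. -/
theorem power_structure_neg_hyperbolic_series {R : Type*} [CommRing R]
    (a : ℕ → R → R)
    (h0 : ∀ r : R, a 0 r = 1)
    (h1 : ∀ r : R, a 1 r = r)
    (hzero : ∀ n : ℕ, 1 ≤ n → a n 0 = 0)
    (hone : ∀ n : ℕ, 1 ≤ n → a n 1 = 1)
    (hadd : ∀ (r s : R) (n : ℕ),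
      a n (r + s) = ∑ i ∈ Finset.range (n + 1), a i r * a (n - i) s)
    (u : R) (hu : ∀ n : ℕ, a n u = u ^ n)
    (H : R) (hH : H = 1 + u)
    (l : ℕ) (hl : 1 ≤ l) :
    PowerSeries.mk (fun n => a n (-(l • H))) =
        ((1 - PowerSeries.X) * (1 - PowerSeries.C u * PowerSeries.X)) ^ l ∧
    ((1 - PowerSeries.X) * (1 - PowerSeries.C u * PowerSeries.X)) ^ l =
        (1 - PowerSeries.C H * PowerSeries.X
          + PowerSeries.C u * PowerSeries.X ^ 2) ^ l ∧
    (∀ n : ℕ, a n (-(l • H)) =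
      Polynomial.coeff
        ((1 - Polynomial.C H * Polynomial.X + Polynomial.C u * Polynomial.X ^ 2) ^ l)
        n) :=
  power_structure_neg_hyperbolic_series_general a h0 hzero hone hadd u hu H hH l
end
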